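/- arXiv:1907.03245 — 2 statements merged into one kernel-verified Lean document; each statement's English description precedes it below -/
import Mathlib

section
/- Let A_k = (a_{ij,k}) be a sequence of N×N doubly stochastic matrices satisfying the uniform positivity and Q-joint strong connectivity conditions. Let z_{i,0} ∈ ℝ^m for i ∈ {1,…,N} be initial vectors whose sum is componentwise strictly negative, i.e., Σ_{i=1}^N z_{i,0} < 0 in every component, and define the iteration z_{i,k+1} = Σ_{j=1}^N a_{ij,k} z_{j,k}. Then there exists a finite k* > 0 such that for all k ≥ k* and all i ∈ {1,…,N}, every component of z_{i,k} is strictly negative (equivalently, for any fixed τ ∈ (0,1), sign(z_{i,k}) ≤ −τ·1_m componentwise for all k ≥ k*). -/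
/-!
Row-stochasticity keeps every upper bound `c` of the states, and column-stochasticity keeps
their mean. If one agent lies `δ` below `c`, the agents lying `a ^ t * δ` below `c` at time `t`
form a set that never shrinks (diagonal weights are at least `a`) and, by joint connectivity,
gains an agent in every window of `Q` steps, so after `T = N * Q` steps it contains everyone.
Applied to `c = mean + D` and an agent below the mean, this contracts the excess `D` of the
states over the mean by the factor `1 - a ^ T` every `T` steps, so eventually all states lie
below a level close to the (negative) mean.
-/

open Finset Matrix
open scoped BigOperators

namespace Matrix

variable {n : Type*} [Fintype n] [DecidableEq n] {M : Matrix n n ℝ} {v : n → ℝ} {c : ℝ}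

lemma mulVec_apply_le_of_mem_rowStochastic (hM : M ∈ rowStochastic ℝ n) (hv : ∀ j, v j ≤ c)
    (i : n) : (M *ᵥ v) i ≤ c :=
  calc (M *ᵥ v) i = ∑ j, M i j * v j := rfl
    _ ≤ ∑ j, M i j * c :=
      sum_le_sum fun j _ => mul_le_mul_of_nonneg_left (hv j) (nonneg_of_mem_rowStochastic hM)
    _ = c := by rw [← sum_mul, sum_row_of_mem_rowStochastic hM, one_mul]

lemma mulVec_apply_le_sub_of_mem_rowStochastic (hM : M ∈ rowStochastic ℝ n)
    (hv : ∀ j, v j ≤ c) {a δ : ℝ} {i j : n} (hδ : 0 ≤ δ) (hMij : a ≤ M i j)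
    (hvj : v j ≤ c - δ) : (M *ᵥ v) i ≤ c - a * δ := by
  have hgap : (M *ᵥ v) i = c - ∑ j, M i j * (c - v j) := by
    simp only [mulVec, dotProduct, mul_sub, sum_sub_distrib, ← sum_mul,
      sum_row_of_mem_rowStochastic hM, one_mul, sub_sub_cancel]
  have hterm : a * δ ≤ M i j * (c - v j) :=
    mul_le_mul hMij (by linarith) hδ (nonneg_of_mem_rowStochastic hM)
  have hsingle : M i j * (c - v j) ≤ ∑ k, M i k * (c - v k) :=
    single_le_sum (fun k _ => mul_nonneg (hM.1 i k) (sub_nonneg.2 (hv k))) (mem_univ j)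
  linarith

end Matrix

lemma Relation.TransGen.exists_crossing {α : Type*} {r : α → α → Prop} {P : α → Prop}
    {i j : α} (h : Relation.TransGen r i j) (hi : P i) (hj : ¬ P j) :
    ∃ p q, P p ∧ ¬ P q ∧ r p q := by
  by_contra! hclosed
  exact h.closed' (P := fun b => ¬ P b) (fun hpq hq hp => hclosed _ _ hp hq hpq) hj hi

lemma Finset.eq_univ_at_card_mul_of_ssubset {ι : Type*} [Fintype ι] {S : ℕ → Finset ι}
    {Q : ℕ} (hS : Monotone S) (hgrow : ∀ t, S t ≠ univ → S t ⊂ S (t + Q)) :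
    S (Fintype.card ι * Q) = univ := by
  have hcard : ∀ n, S (n * Q) = univ ∨ n ≤ #(S (n * Q)) := by
    intro n
    induction n with
    | zero => exact .inr (Nat.zero_le _)
    | succ n ih =>
      have hstep : n * Q + Q = (n + 1) * Q := by ring
      by_cases huniv : S (n * Q) = univ
      · left
        exact eq_univ_of_forall fun i =>
          hS (Nat.mul_le_mul_right Q n.le_succ) (huniv ▸ mem_univ i)
      · right
        have := card_lt_card (hstep ▸ hgrow _ huniv)
        have := ih.resolve_left huniv
        omega
  rcases hcard (Fintype.card ι) with h | h
  · exact h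
  · exact eq_univ_of_card _ (le_antisymm (card_le_univ _) h)

section Consensus

variable {ι : Type*} [Fintype ι] [DecidableEq ι] {A : ℕ → Matrix ι ι ℝ} {x : ℕ → ι → ℝ}

lemma iterate_le_of_le (hArow : ∀ k, A k ∈ rowStochastic ℝ ι)
    (hx : ∀ k, x (k + 1) = A k *ᵥ x k) {k k' : ℕ} {c : ℝ} (hc : ∀ i, x k i ≤ c)
    (hkk' : k ≤ k') : ∀ i, x k' i ≤ c := by
  induction k', hkk' using Nat.le_induction with
  | base => exact hc
  | succ k' _ ih => exact fun i => hx k' ▸ mulVec_apply_le_of_mem_rowStochastic (hArow k') ih i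

lemma expect_iterate (hAcol : ∀ k, A k ∈ colStochastic ℝ ι)
    (hx : ∀ k, x (k + 1) = A k *ᵥ x k) (k : ℕ) : 𝔼 i, x k i = 𝔼 i, x 0 i := by
  induction k with
  | zero => rfl
  | succ k ih => rw [← ih, expect_eq_sum_div_card, expect_eq_sum_div_card, hx,
      sum_mulVec_of_mem_colStochastic (hAcol k)]

def JointlyStronglyConnected (A : ℕ → Matrix ι ι ℝ) (Q : ℕ) : Prop :=
  ∀ k i j, i ≠ j → Relation.TransGen (fun p q => ∃ l < Q, 0 < A (k + l) q p) i j

lemma iterate_card_mul_le_sub {Q : ℕ} {a c δ : ℝ} (hArow : ∀ k, A k ∈ rowStochastic ℝ ι)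
    (ha : 0 ≤ a) (hAdiag : ∀ k i, a ≤ A k i i) (hAa : ∀ k i j, 0 < A k i j → a ≤ A k i j)
    (hconn : JointlyStronglyConnected A Q) (hx : ∀ k, x (k + 1) = A k *ᵥ x k)
    (hc : ∀ i, x 0 i ≤ c) (hδ : 0 ≤ δ) {j : ι} (hj : x 0 j ≤ c - δ) :
    ∀ i, x (Fintype.card ι * Q) i ≤ c - a ^ (Fintype.card ι * Q) * δ := by
  let S : ℕ → Finset ι := fun t => {i | x t i ≤ c - a ^ t * δ}
  have hstep : ∀ {t p q}, p ∈ S t → a ≤ A t q p → q ∈ S (t + 1) := by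
    intro t p q hp hqp
    simp only [S, mem_filter, mem_univ, true_and, hx, pow_succ', mul_assoc] at hp ⊢
    exact mulVec_apply_le_sub_of_mem_rowStochastic (hArow t)
      (iterate_le_of_le hArow hx hc (Nat.zero_le t)) (by positivity) hqp hp
  have hmono : Monotone S := monotone_nat_of_le_succ fun t p hp => hstep hp (hAdiag t p)
  have hj : ∀ t, j ∈ S t := fun t => hmono (Nat.zero_le t) (by simpa [S] using hj)
  have hgrow : ∀ t, S t ≠ univ → S t ⊂ S (t + Q) := by
    intro t ht
    obtain ⟨q₀, hq₀⟩ : ∃ q, q ∉ S t := by simpa [eq_univ_iff_forall] using ht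
    obtain ⟨p, q, hp, hq, l, hl, hqp⟩ :=
      (hconn t j q₀ (ne_of_mem_of_not_mem (hj t) hq₀)).exists_crossing (hj t) hq₀
    have hq' : q ∈ S (t + l + 1) := hstep (hmono (Nat.le_add_right t l) hp) (hAa _ _ _ hqp)
    exact (ssubset_iff_of_subset (hmono (Nat.le_add_right t Q))).2
      ⟨q, hmono (by omega) hq', hq⟩
  intro i
  have hi : i ∈ S (Fintype.card ι * Q) :=
    eq_univ_at_card_mul_of_ssubset hmono hgrow ▸ mem_univ i
  simpa [S] using hi

lemma iterate_add_card_mul_le_expect_add {Q : ℕ} {a : ℝ}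
    (hArow : ∀ k, A k ∈ rowStochastic ℝ ι) (ha : 0 ≤ a) (hAdiag : ∀ k i, a ≤ A k i i)
    (hAa : ∀ k i j, 0 < A k i j → a ≤ A k i j) (hconn : JointlyStronglyConnected A Q)
    (hx : ∀ k, x (k + 1) = A k *ᵥ x k) {k : ℕ} {D : ℝ}
    (hD : ∀ i, x k i ≤ 𝔼 j, x k j + D) (i : ι) :
    x (k + Fintype.card ι * Q) i ≤ 𝔼 j, x k j + (1 - a ^ (Fintype.card ι * Q)) * D := by
  have hne : (univ : Finset ι).Nonempty := ⟨i, mem_univ i⟩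
  obtain ⟨j, -, hj⟩ := exists_le_of_expect_le hne (le_refl (𝔼 j, x k j))
  obtain ⟨j', -, hj'⟩ := exists_le_of_le_expect hne (le_refl (𝔼 j, x k j))
  have hconn' : JointlyStronglyConnected (fun t => A (k + t)) Q := fun t i j hij => by
    simpa only [add_assoc] using hconn (k + t) i j hij
  have := iterate_card_mul_le_sub (x := fun t => x (k + t)) (c := 𝔼 j, x k j + D) (δ := D)
    (fun t => hArow (k + t)) ha (fun t => hAdiag (k + t)) (fun t => hAa (k + t)) hconn'
    (fun t => hx (k + t)) hD (by linarith [hD j']) (j := j) (by simpa using hj) i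
  exact this.trans_eq (by ring)

theorem eventually_iterate_neg_of_sum_neg {Q : ℕ} {a : ℝ}
    (hArow : ∀ k, A k ∈ rowStochastic ℝ ι) (hAcol : ∀ k, A k ∈ colStochastic ℝ ι) (ha : 0 < a)
    (hAdiag : ∀ k i, a ≤ A k i i) (hAa : ∀ k i j, 0 < A k i j → a ≤ A k i j)
    (hconn : JointlyStronglyConnected A Q) (hx : ∀ k, x (k + 1) = A k *ᵥ x k)
    (hsum : ∑ i, x 0 i < 0) :
    ∀ᶠ k in Filter.atTop, ∀ i, x k i < 0 := by
  have hμ : 𝔼 i, x 0 i < 0 := by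
    obtain ⟨i, -, -⟩ := exists_ne_zero_of_sum_ne_zero hsum.ne
    rw [expect_eq_sum_div_card]
    exact div_neg_of_neg_of_pos hsum (Nat.cast_pos.2 (card_pos.2 ⟨i, mem_univ i⟩))
  set T := Fintype.card ι * Q
  set μ := 𝔼 i, x 0 i
  obtain ⟨c, hc⟩ := Finite.exists_le (x 0)
  set D := max (c - μ) 1
  have hdecay : ∀ n i, x (n * T) i ≤ μ + (1 - a ^ T) ^ n * D := by
    intro n
    induction n with
    | zero => exact fun i => by simpa using (hc i).trans (by linarith [le_max_left (c - μ) 1])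
    | succ n ih =>
      intro i
      have := iterate_add_card_mul_le_expect_add hArow ha.le hAdiag hAa hconn hx
        (by rwa [expect_iterate hAcol hx]) i
      rw [expect_iterate hAcol hx, ← add_one_mul] at this
      exact this.trans_eq (by ring)
  obtain ⟨n, hn⟩ := exists_pow_lt_of_lt_one (div_pos (neg_pos.2 hμ) (by positivity : 0 < D))
    (sub_lt_self 1 (pow_pos ha T))
  rw [lt_div_iff₀ (by positivity)] at hn
  filter_upwards [Filter.eventually_ge_atTop (n * T)] with k hk i
  exact (iterate_le_of_le hArow hx (hdecay n) hk i).trans_lt (by linarith)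

end Consensus

theorem consensus_eventually_negative_general (N m : ℕ)
    (A : ℕ → Fin N → Fin N → ℝ) (a : ℝ) (ha : a ∈ Set.Ioo (0 : ℝ) 1)
    (Q : ℕ)
    (hAnn : ∀ k i j, 0 ≤ A k i j)
    (hAdiag : ∀ k i, a ≤ A k i i)
    (hAa : ∀ k i j, 0 < A k i j → a ≤ A k i j)
    (hArow : ∀ k i, ∑ j, A k i j = 1)
    (hAcol : ∀ k j, ∑ i, A k i j = 1)
    (hconn : ∀ k : ℕ, ∀ i j : Fin N, i ≠ j →
      Relation.TransGen (fun p q : Fin N => ∃ l < Q, 0 < A (k + l) q p) i j)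
    (z : ℕ → Fin N → EuclideanSpace ℝ (Fin m))
    (hz0 : ∀ l, (∑ i, z 0 i) l < 0)
    (hzupd : ∀ k i, z (k + 1) i = ∑ j, A k i j • z k j) :
    ∃ kstar : ℕ, 0 < kstar ∧ ∀ k, kstar ≤ k → ∀ i l, z k i l < 0 := by
  have hcoord : ∀ l, ∀ᶠ k in Filter.atTop, ∀ i, z k i l < 0 := fun l =>
    eventually_iterate_neg_of_sum_neg (x := fun k i => z k i l)
      (fun k => mem_rowStochastic_iff_sum.2 ⟨hAnn k, hArow k⟩)
      (fun k => mem_colStochastic_iff_sum.2 ⟨hAnn k, hAcol k⟩) ha.1 hAdiag hAa hconn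
      (fun k => funext fun i => by simp [hzupd, mulVec, dotProduct])
      (by simpa using hz0 l)
  obtain ⟨K, hK⟩ := Filter.eventually_atTop.1 (Filter.eventually_all.2 hcoord)
  exact ⟨K + 1, K.succ_pos, fun k hk i l => hK k (by omega) l i⟩

/-- Averaging consensus drives states negative when the initial sum is negative:
with doubly stochastic weight matrices satisfying the uniform positivity and
Q-joint strong connectivity conditions, and initial vectors whose sum is
componentwise strictly negative, the iteration `z_{i,k+1} = Σⱼ a_{ij,k} z_{j,k}`
makes every component of every state strictly negative after finitely many steps. -/
theorem consensus_eventually_negative (N m : ℕ) (hN : 0 < N)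
    (A : ℕ → Fin N → Fin N → ℝ) (a : ℝ) (ha : a ∈ Set.Ioo (0 : ℝ) 1)
    (Q : ℕ) (hQ : 0 < Q)
    (hAnn : ∀ k i j, 0 ≤ A k i j)
    (hAdiag : ∀ k i, a ≤ A k i i)
    (hAa : ∀ k i j, 0 < A k i j → a ≤ A k i j)
    (hArow : ∀ k i, ∑ j, A k i j = 1)
    (hAcol : ∀ k j, ∑ i, A k i j = 1)
    (hconn : ∀ k : ℕ, ∀ i j : Fin N, i ≠ j →
      Relation.TransGen (fun p q : Fin N => ∃ l < Q, 0 < A (k + l) q p) i j)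
    (z : ℕ → Fin N → EuclideanSpace ℝ (Fin m))
    (hz0 : ∀ l, (∑ i, z 0 i) l < 0)
    (hzupd : ∀ k i, z (k + 1) i = ∑ j, A k i j • z k j) :
    ∃ kstar : ℕ, 0 < kstar ∧ ∀ k, kstar ≤ k → ∀ i l, z k i l < 0 :=
  consensus_eventually_negative_general N m A a ha Q hAnn hAdiag hAa hArow hAcol hconn z hz0 hzupd
end

section
/- Finite-time max-consensus: Let A_k = (a_{ij,k}) be a sequence of N×N matrices with nonnegative entries such that a_{ii,k} > 0 for all i and k, and such that for every k the directed graph on {1,…,N} whose edges are the pairs (j,i) with a_{ij,l} > 0 for some l ∈ {k,…,k+Q−1} is strongly connected. Define the in-neighbor sets N⁺_{i,k} = { j : a_{ij,k} > 0 } (which contain i), and given initial values s_{i,0} ∈ ℝ, define the max-consensus iteration s_{i,k+1} = max{ s_{j,k} : j ∈ N⁺_{i,k} }. Then for all k ≥ (N−1)·Q and all i ∈ {1,…,N}, s_{i,k} = max_{j∈{1,…,N}} s_{j,0}. -/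
/-!
Fix an initial value `c = s_{j,0}` and call an agent informed at time `k` when its value is at
least `c`. Because every agent hears itself, an informed agent stays informed, and every agent
hearing an informed one becomes informed. Joint strong connectivity over any window of `Q`
steps yields an edge from an informed to an uninformed agent within the window, so until all
agents are informed, each window informs a new one; after `(N - 1) * Q` steps every value
dominates `c`. Since every value is always one of the initial values, it is their maximum.
-/

open Finset Relation

theorem Relation.TransGen.exists_rel_of_not {α : Type*} {r : α → α → Prop} {S : α → Prop}
    {a b : α} (h : TransGen r a b) (ha : S a) (hb : ¬ S b) :
    ∃ p q, S p ∧ ¬ S q ∧ r p q := by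
  induction h with
  | single hab => exact ⟨_, _, ha, hb, hab⟩
  | @tail c _ _ hcb ih =>
    by_cases hc : S c
    · exact ⟨_, _, hc, hb, hcb⟩
    · exact ih hc

theorem Finset.eq_univ_of_ssubset_succ_of_ne_univ {ι : Type*} [Fintype ι] (T : ℕ → Finset ι)
    (h₀ : (T 0).Nonempty) (hsub : ∀ m, T m ⊆ T (m + 1))
    (hgrow : ∀ m, T m ≠ univ → T m ⊂ T (m + 1)) :
    T (Fintype.card ι - 1) = univ := by
  have hcard : ∀ m, min (m + 1) (Fintype.card ι) ≤ #(T m) := by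
    intro m
    induction m with
    | zero =>
      have := h₀.card_pos
      omega
    | succ m ih =>
      by_cases hT : T m = univ
      · have := card_le_card (hsub m)
        rw [hT, card_univ] at this
        omega
      · have := card_lt_card (hgrow m hT)
        omega
  apply eq_univ_of_card
  have := card_le_univ (T (Fintype.card ι - 1))
  have := hcard (Fintype.card ι - 1)
  omega

section Spreading

variable {ι : Type*} {adj : ℕ → ι → ι → Prop} {P : ℕ → ι → Prop}

theorem informed_mono (hself : ∀ k i, adj k i i)
    (hspread : ∀ k i j, adj k i j → P k j → P (k + 1) i)
    {k k' : ℕ} (hk : k ≤ k') {i : ι} (h : P k i) : P k' i := by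
  induction hk with
  | refl => exact h
  | step _ ih => exact hspread _ _ _ (hself _ _) ih

theorem exists_newly_informed (hself : ∀ k i, adj k i i)
    (hspread : ∀ k i j, adj k i j → P k j → P (k + 1) i) {Q k : ℕ}
    (hconn : ∀ i j : ι, i ≠ j → TransGen (fun p q => ∃ l < Q, adj (k + l) q p) i j)
    {i j : ι} (hj : P k j) (hi : ¬ P k i) : ∃ q, ¬ P k q ∧ P (k + Q) q := by
  obtain ⟨p, q, hp, hq, l, hl, hqp⟩ :=
    (hconn j i fun hji => hi (hji ▸ hj)).exists_rel_of_not (S := P k) hj hi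
  have hp' : P (k + l) p := informed_mono hself hspread (Nat.le_add_right k l) hp
  exact ⟨q, hq, informed_mono hself hspread (by omega) (hspread _ _ _ hqp hp')⟩

theorem informed_of_card_sub_one_mul_le [Fintype ι] (hself : ∀ k i, adj k i i)
    (hspread : ∀ k i j, adj k i j → P k j → P (k + 1) i) {Q : ℕ}
    (hconn : ∀ k, ∀ i j : ι, i ≠ j → TransGen (fun p q => ∃ l < Q, adj (k + l) q p) i j)
    {j₀ : ι} (h₀ : P 0 j₀) {k : ℕ} (hk : (Fintype.card ι - 1) * Q ≤ k) (i : ι) : P k i := by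
  classical
  let T : ℕ → Finset ι := fun m => univ.filter (P (m * Q))
  have mem_T : ∀ m x, x ∈ T m ↔ P (m * Q) x := by simp [T]
  have hsub : ∀ m, T m ⊆ T (m + 1) := fun m x hx => by
    rw [mem_T] at hx ⊢
    exact informed_mono hself hspread (Nat.mul_le_mul_right Q m.le_succ) hx
  have hgrow : ∀ m, T m ≠ univ → T m ⊂ T (m + 1) := by
    intro m hm
    obtain ⟨x, -, hx⟩ := exists_of_ssubset (ssubset_univ_iff.2 hm)
    have hj₀ : P (m * Q) j₀ := informed_mono hself hspread (Nat.zero_le _) h₀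
    obtain ⟨q, hq, hq'⟩ :=
      exists_newly_informed hself hspread (hconn (m * Q)) hj₀ ((mem_T m x).not.1 hx)
    rw [ssubset_iff_of_subset (hsub m)]
    exact ⟨q, (mem_T _ q).2 (by rwa [Nat.succ_mul]), (mem_T m q).not.2 hq⟩
  have hall := eq_univ_of_ssubset_succ_of_ne_univ T ⟨j₀, (mem_T 0 j₀).2 (by simpa using h₀)⟩
    hsub hgrow
  exact informed_mono hself hspread hk ((mem_T _ i).1 (hall ▸ mem_univ i))

end Spreading

section MaxConsensus

variable {ι α : Type*} {adj : ℕ → ι → ι → Prop} {s : ℕ → ι → α}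

theorem exists_eq_initial_of_maxConsensus
    (hupd : ∀ k i, ∃ j, adj k i j ∧ s (k + 1) i = s k j) (k : ℕ) (i : ι) :
    ∃ j, s k i = s 0 j := by
  induction k generalizing i with
  | zero => exact ⟨i, rfl⟩
  | succ k ih =>
    obtain ⟨j, -, hj⟩ := hupd k i
    rw [hj]
    exact ih j

theorem isGreatest_initial_of_maxConsensus [Fintype ι] [Preorder α] {Q : ℕ}
    (hself : ∀ k i, adj k i i)
    (hconn : ∀ k, ∀ i j : ι, i ≠ j → TransGen (fun p q => ∃ l < Q, adj (k + l) q p) i j)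
    (hupd : ∀ k i, (∃ j, adj k i j ∧ s (k + 1) i = s k j) ∧ ∀ j, adj k i j → s k j ≤ s (k + 1) i)
    {k : ℕ} (hk : (Fintype.card ι - 1) * Q ≤ k) (i : ι) :
    IsGreatest (Set.range (s 0)) (s k i) := by
  refine ⟨?_, ?_⟩
  · obtain ⟨j, hj⟩ := exists_eq_initial_of_maxConsensus (fun k i => (hupd k i).1) k i
    exact ⟨j, hj.symm⟩
  · rintro _ ⟨j, rfl⟩
    exact informed_of_card_sub_one_mul_le (P := fun k i => s 0 j ≤ s k i) hself
      (fun k i j' hij' hj' => hj'.trans ((hupd k i).2 j' hij')) hconn le_rfl hk i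

end MaxConsensus

theorem finite_time_max_consensus_general (N Q : ℕ)
    (A : ℕ → Fin N → Fin N → ℝ)
    (hAdiag : ∀ k i, 0 < A k i i)
    (hconn : ∀ k : ℕ, ∀ i j : Fin N, i ≠ j →
      Relation.TransGen (fun p q : Fin N => ∃ l < Q, 0 < A (k + l) q p) i j)
    (s : ℕ → Fin N → ℝ)
    (hupd : ∀ k i, (∃ j, 0 < A k i j ∧ s (k + 1) i = s k j) ∧
      ∀ j, 0 < A k i j → s k j ≤ s (k + 1) i) :
    ∀ k, (N - 1) * Q ≤ k → ∀ i,
      IsGreatest (Set.range fun j => s 0 j) (s k i) := fun _ hk =>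
  isGreatest_initial_of_maxConsensus (adj := fun k i j => 0 < A k i j) hAdiag hconn hupd
    (by rwa [Fintype.card_fin])

/-- Finite-time max-consensus: with weight matrices having positive diagonal and
Q-jointly strongly connected communication graphs, the max-consensus iteration
`s_{i,k+1} = max{ s_{j,k} : a_{ij,k} > 0 }` reaches, after at most `(N-1)·Q` steps,
the maximum of the initial values at every agent. -/
theorem finite_time_max_consensus (N Q : ℕ) (hN : 0 < N) (hQ : 0 < Q)
    (A : ℕ → Fin N → Fin N → ℝ)
    (hAnn : ∀ k i j, 0 ≤ A k i j)
    (hAdiag : ∀ k i, 0 < A k i i)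
    (hconn : ∀ k : ℕ, ∀ i j : Fin N, i ≠ j →
      Relation.TransGen (fun p q : Fin N => ∃ l < Q, 0 < A (k + l) q p) i j)
    (s : ℕ → Fin N → ℝ)
    (hupd : ∀ k i, (∃ j, 0 < A k i j ∧ s (k + 1) i = s k j) ∧
      ∀ j, 0 < A k i j → s k j ≤ s (k + 1) i) :
    ∀ k, (N - 1) * Q ≤ k → ∀ i,
      IsGreatest (Set.range fun j => s 0 j) (s k i) :=
  finite_time_max_consensus_general N Q A hAdiag hconn s hupd
end
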